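/- arXiv:2205.11292 — 4 statements merged into one kernel-verified Lean document; each statement's English description precedes it below -/
import Mathlib

section
/- Let y₀, y₁, y₂ be linearly independent solutions of y''' + p₁y' + p₀y = 0. Then W(y₁,y₂), W(y₂,y₀), W(y₀,y₁) are linearly independent solutions of the dual equation Y''' + p₁Y' + (p₁' - p₀)Y = 0, where W(f,g) = f'g - fg'. -/
/-!
The Wronskian `W = f'g - fg'` of two solutions satisfies `W'' = f''g' - f'g'' - p₁ W`; one more
derivative, simplified with the equations of `f` and `g`, is the dual equation.

For independence write `Y = (y₀, y₁, y₂)`. The vector of the three Wronskians is `Y' × Y`, and its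
first two derivatives are `Y'' × Y` and `Y'' × Y' - p₁ (Y' × Y)`. So the coefficients `g` of a
linear relation are orthogonal to `b × a`, `c × a` and `c × b`, where `a, b, c` are
`Y(0), Y'(0), Y''(0)`, and Cramer's identity forces `g = 0` once `det (a, b, c) ≠ 0`. That determinant does not vanish:
otherwise some nontrivial combination of the `yᵢ` would be a solution with zero initial data at `0`,
hence have all Taylor coefficients zero (each derivative of a solution is a combination of
`y, y', y''`), hence vanish as an entire function.
-/

open Matrix

theorem deriv_sum_const_mul {ι : Type*} [Fintype ι] (c : ι → ℂ) {F : ι → ℂ → ℂ}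
    (hF : ∀ i, Differentiable ℂ (F i)) :
    deriv (fun z => ∑ i, c i * F i z) = fun z => ∑ i, c i * deriv (F i) z := by
  funext z
  exact (HasDerivAt.fun_sum fun i _ => ((hF i z).hasDerivAt.const_mul (c i))).deriv

theorem cross_eq_fun_cyclic {R : Type*} [CommRing R] (a b : Fin 3 → R) :
    a ⨯₃ b = fun i => a (i + 1) * b (i + 2) - a (i + 2) * b (i + 1) := by
  ext i
  fin_cases i <;> rfl

theorem eq_zero_of_dotProduct_cross_eq_zero {K : Type*} [Field K] {a b c g : Fin 3 → K}
    (hdet : det ![a, b, c] ≠ 0) (hab : g ⬝ᵥ a ⨯₃ b = 0) (hbc : g ⬝ᵥ b ⨯₃ c = 0)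
    (hca : g ⬝ᵥ c ⨯₃ a = 0) : g = 0 := by
  have hcramer : det ![a, b, c] • g =
      (g ⬝ᵥ b ⨯₃ c) • a + (g ⬝ᵥ c ⨯₃ a) • b + (g ⬝ᵥ a ⨯₃ b) • c := by
    rw [← triple_product_eq_det]
    ext i
    fin_cases i <;> simp [cross_apply, vecHead, vecTail] <;> ring
  rw [hab, hbc, hca] at hcramer
  simpa [hdet] using hcramer

noncomputable def wronskian (f g : ℂ → ℂ) : ℂ → ℂ := fun z => deriv f z * g z - f z * deriv g z

theorem deriv_wronskian {f g : ℂ → ℂ} (hf : Differentiable ℂ f) (hg : Differentiable ℂ g) :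
    deriv (wronskian f g) = fun z => deriv (deriv f) z * g z - f z * deriv (deriv g) z := by
  funext z
  unfold wronskian
  rw [deriv_fun_sub (by fun_prop) (by fun_prop), deriv_fun_mul (by fun_prop) (by fun_prop),
    deriv_fun_mul (by fun_prop) (by fun_prop)]
  ring

def IsThirdOrderSolution (p₀ p₁ y : ℂ → ℂ) : Prop :=
  ∀ z, deriv (deriv (deriv y)) z + p₁ z * deriv y z + p₀ z * y z = 0

namespace IsThirdOrderSolution

variable {p₀ p₁ : ℂ → ℂ}

theorem sum {ι : Type*} [Fintype ι] {y : ι → ℂ → ℂ} (hy : ∀ i, Differentiable ℂ (y i))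
    (hsol : ∀ i, IsThirdOrderSolution p₀ p₁ (y i)) (c : ι → ℂ) :
    IsThirdOrderSolution p₀ p₁ (fun z => ∑ i, c i * y i z) := by
  intro z
  rw [deriv_sum_const_mul c hy, deriv_sum_const_mul c fun i => (hy i).deriv,
    deriv_sum_const_mul c fun i => (hy i).deriv.deriv]
  simp only [Finset.mul_sum, ← Finset.sum_add_distrib]
  exact Finset.sum_eq_zero fun i _ => by linear_combination c i * hsol i z

theorem exists_iteratedDeriv_eq {y : ℂ → ℂ} (hp₀ : Differentiable ℂ p₀)
    (hp₁ : Differentiable ℂ p₁) (hy : Differentiable ℂ y) (hsol : IsThirdOrderSolution p₀ p₁ y)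
    (n : ℕ) :
    ∃ a b c : ℂ → ℂ, Differentiable ℂ a ∧ Differentiable ℂ b ∧ Differentiable ℂ c ∧
      iteratedDeriv n y = fun z => a z * y z + b z * deriv y z + c z * deriv (deriv y) z := by
  induction n with
  | zero => exact ⟨1, 0, 0, by fun_prop, by fun_prop, by fun_prop, by funext z; simp⟩
  | succ n ih =>
    obtain ⟨a, b, c, ha, hb, hc, hn⟩ := ih
    refine ⟨fun z => deriv a z - c z * p₀ z, fun z => a z + deriv b z - c z * p₁ z,
      fun z => b z + deriv c z, by fun_prop, by fun_prop, by fun_prop, ?_⟩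
    funext z
    rw [iteratedDeriv_succ, hn, deriv_fun_add (by fun_prop) (by fun_prop),
      deriv_fun_add (by fun_prop) (by fun_prop), deriv_fun_mul (by fun_prop) (by fun_prop),
      deriv_fun_mul (by fun_prop) (by fun_prop), deriv_fun_mul (by fun_prop) (by fun_prop)]
    linear_combination c z * hsol z

theorem eq_zero_of_initial_eq_zero {y : ℂ → ℂ} (hp₀ : Differentiable ℂ p₀)
    (hp₁ : Differentiable ℂ p₁) (hy : Differentiable ℂ y) (hsol : IsThirdOrderSolution p₀ p₁ y)
    {z₀ : ℂ} (h0 : y z₀ = 0) (h1 : deriv y z₀ = 0) (h2 : deriv (deriv y) z₀ = 0) : y = 0 := by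
  have hvanish : ∀ n, iteratedDeriv n y z₀ = 0 := fun n => by
    obtain ⟨a, b, c, -, -, -, hn⟩ := exists_iteratedDeriv_eq hp₀ hp₁ hy hsol n
    simp [hn, h0, h1, h2]
  funext z
  simp [← Complex.taylorSeries_eq_of_entire hy z₀ z, hvanish]

end IsThirdOrderSolution

section Wronskian

variable {p₀ p₁ f g : ℂ → ℂ}

theorem differentiable_wronskian (hf : Differentiable ℂ f) (hg : Differentiable ℂ g) :
    Differentiable ℂ (wronskian f g) := by
  unfold wronskian
  fun_prop

theorem deriv_deriv_wronskian (hf : Differentiable ℂ f) (hg : Differentiable ℂ g)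
    (hfs : IsThirdOrderSolution p₀ p₁ f) (hgs : IsThirdOrderSolution p₀ p₁ g) :
    deriv (deriv (wronskian f g)) = fun z =>
      deriv (deriv f) z * deriv g z - deriv f z * deriv (deriv g) z - p₁ z * wronskian f g z := by
  funext z
  rw [deriv_wronskian hf hg, deriv_fun_sub (by fun_prop) (by fun_prop),
    deriv_fun_mul (by fun_prop) (by fun_prop), deriv_fun_mul (by fun_prop) (by fun_prop)]
  unfold wronskian
  linear_combination g z * hfs z - f z * hgs z

theorem isThirdOrderSolution_wronskian (hp₁ : Differentiable ℂ p₁) (hf : Differentiable ℂ f)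
    (hg : Differentiable ℂ g) (hfs : IsThirdOrderSolution p₀ p₁ f)
    (hgs : IsThirdOrderSolution p₀ p₁ g) :
    IsThirdOrderSolution (deriv p₁ - p₀) p₁ (wronskian f g) := by
  have hW := differentiable_wronskian hf hg
  intro z
  rw [deriv_deriv_wronskian hf hg hfs hgs, deriv_fun_sub (by fun_prop) (by fun_prop),
    deriv_fun_sub (by fun_prop) (by fun_prop), deriv_fun_mul (by fun_prop) (by fun_prop),
    deriv_fun_mul (by fun_prop) (by fun_prop), deriv_fun_mul (by fun_prop) (by fun_prop),
    deriv_wronskian hf hg]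
  unfold wronskian
  simp only [Pi.sub_apply]
  linear_combination deriv g z * hfs z - deriv f z * hgs z

end Wronskian

section Independence

variable {p₀ p₁ : ℂ → ℂ} {y : Fin 3 → ℂ → ℂ}

theorem det_ne_zero_of_linearIndependent (hp₀ : Differentiable ℂ p₀)
    (hp₁ : Differentiable ℂ p₁) (hy : ∀ i, Differentiable ℂ (y i))
    (hsol : ∀ i, IsThirdOrderSolution p₀ p₁ (y i)) (hind : LinearIndependent ℂ y) (z₀ : ℂ) :
    det ![fun i => y i z₀, fun i => deriv (y i) z₀, fun i => deriv (deriv (y i)) z₀] ≠ 0 := by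
  intro hdet
  obtain ⟨v, hv, hMv⟩ := exists_mulVec_eq_zero_iff.mpr hdet
  have hinit : ∀ k : Fin 3, v ⬝ᵥ ![fun i => y i z₀, fun i => deriv (y i) z₀,
      fun i => deriv (deriv (y i)) z₀] k = 0 := fun k => by
    rw [dotProduct_comm]; exact congrFun hMv k
  have hzero := (IsThirdOrderSolution.sum hy hsol v).eq_zero_of_initial_eq_zero hp₀ hp₁
    (by fun_prop) (hinit 0) (by rw [deriv_sum_const_mul v hy]; exact hinit 1)
    (by rw [deriv_sum_const_mul v hy, deriv_sum_const_mul v fun i => (hy i).deriv]; exact hinit 2)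
  exact hv (funext <| Fintype.linearIndependent_iff.mp hind v <| funext fun z => by
    simpa using congrFun hzero z)

theorem linearIndependent_wronskian (hp₀ : Differentiable ℂ p₀)
    (hp₁ : Differentiable ℂ p₁) (hy : ∀ i, Differentiable ℂ (y i))
    (hsol : ∀ i, IsThirdOrderSolution p₀ p₁ (y i)) (hind : LinearIndependent ℂ y) :
    LinearIndependent ℂ fun i : Fin 3 => wronskian (y (i + 1)) (y (i + 2)) := by
  set W : Fin 3 → ℂ → ℂ := fun i => wronskian (y (i + 1)) (y (i + 2))
  set a : Fin 3 → ℂ := fun i => y i 0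
  set b : Fin 3 → ℂ := fun i => deriv (y i) 0
  set c : Fin 3 → ℂ := fun i => deriv (deriv (y i)) 0
  have hW : ∀ i, Differentiable ℂ (W i) := fun i => differentiable_wronskian (hy _) (hy _)
  rw [Fintype.linearIndependent_iff]
  intro g hg
  have h0 : ∀ z, ∑ i, g i * W i z = 0 := fun z => by simpa using congrFun hg z
  have h1 : ∀ z, ∑ i, g i * deriv (W i) z = 0 := fun z => by
    rw [← congrFun (deriv_sum_const_mul g hW) z, funext h0, deriv_const]
  have h2 : ∀ z, ∑ i, g i * deriv (deriv (W i)) z = 0 := fun z => by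
    rw [← congrFun (deriv_sum_const_mul g fun i => (hW i).deriv) z, funext h1, deriv_const]
  have hba : b ⨯₃ a = fun i => W i 0 := by
    rw [cross_eq_fun_cyclic]; funext i; simp only [W, wronskian]; ring
  have hca : c ⨯₃ a = fun i => deriv (W i) 0 := by
    rw [cross_eq_fun_cyclic]; funext i; simp only [W, deriv_wronskian (hy _) (hy _)]; ring
  have hcb : c ⨯₃ b = (fun i => deriv (deriv (W i)) 0) + p₁ 0 • fun i => W i 0 := by
    rw [cross_eq_fun_cyclic]; funext i
    simp only [W, deriv_deriv_wronskian (hy _) (hy _) (hsol _) (hsol _), Pi.add_apply,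
      Pi.smul_apply, smul_eq_mul]
    ring
  refine congrFun (eq_zero_of_dotProduct_cross_eq_zero
    (det_ne_zero_of_linearIndependent hp₀ hp₁ hy hsol hind 0) ?_ ?_ ?_)
  · rw [← cross_anticomm, dotProduct_neg, hba, neg_eq_zero]; exact h0 0
  · rw [← cross_anticomm, dotProduct_neg, hcb, dotProduct_add, dotProduct_smul]
    simp [dotProduct, h0 0, h2 0]
  · rw [hca]; exact h1 0

end Independence

/-- If `y₀, y₁, y₂` are linearly independent (smooth) solutions of
`y''' + p₁ y' + p₀ y = 0`, then `W(y₁,y₂), W(y₂,y₀), W(y₀,y₁)` are linearly independent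
solutions of the dual equation `Y''' + p₁ Y' + (p₁' - p₀) Y = 0`,
where `W(f,g) = f'g - fg'`. -/
theorem stmt4 (p₀ p₁ y₀ y₁ y₂ : ℂ → ℂ)
    (hp₀ : ContDiff ℂ ⊤ p₀) (hp₁ : ContDiff ℂ ⊤ p₁)
    (hy₀ : ContDiff ℂ ⊤ y₀) (hy₁ : ContDiff ℂ ⊤ y₁) (hy₂ : ContDiff ℂ ⊤ y₂)
    (h₀ : ∀ z, deriv (deriv (deriv y₀)) z + p₁ z * deriv y₀ z + p₀ z * y₀ z = 0)
    (h₁ : ∀ z, deriv (deriv (deriv y₁)) z + p₁ z * deriv y₁ z + p₀ z * y₁ z = 0)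
    (h₂ : ∀ z, deriv (deriv (deriv y₂)) z + p₁ z * deriv y₂ z + p₀ z * y₂ z = 0)
    (hind : LinearIndependent ℂ ![y₀, y₁, y₂]) :
    LinearIndependent ℂ
      ![fun z => deriv y₁ z * y₂ z - y₁ z * deriv y₂ z,
        fun z => deriv y₂ z * y₀ z - y₂ z * deriv y₀ z,
        fun z => deriv y₀ z * y₁ z - y₀ z * deriv y₁ z] ∧
    (∀ Y ∈ ({fun z => deriv y₁ z * y₂ z - y₁ z * deriv y₂ z,
              fun z => deriv y₂ z * y₀ z - y₂ z * deriv y₀ z,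
              fun z => deriv y₀ z * y₁ z - y₀ z * deriv y₁ z} : Set (ℂ → ℂ)),
      ∀ z, deriv (deriv (deriv Y)) z + p₁ z * deriv Y z
        + (deriv p₁ z - p₀ z) * Y z = 0) := by
  have hdiff {u : ℂ → ℂ} (hu : ContDiff ℂ ⊤ u) : Differentiable ℂ u :=
    hu.differentiable WithTop.top_ne_zero
  have hy : ∀ i, Differentiable ℂ (![y₀, y₁, y₂] i) := by
    intro i; fin_cases i
    exacts [hdiff hy₀, hdiff hy₁, hdiff hy₂]
  have hsol : ∀ i, IsThirdOrderSolution p₀ p₁ (![y₀, y₁, y₂] i) := by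
    intro i; fin_cases i
    exacts [h₀, h₁, h₂]
  refine ⟨?_, ?_⟩
  · convert linearIndependent_wronskian (hdiff hp₀) (hdiff hp₁) hy hsol hind using 1
    ext i : 1
    fin_cases i <;> rfl
  · rintro Y (rfl | rfl | rfl)
    exacts [isThirdOrderSolution_wronskian (hdiff hp₁) (hy 1) (hy 2) (hsol 1) (hsol 2),
      isThirdOrderSolution_wronskian (hdiff hp₁) (hy 2) (hy 0) (hsol 2) (hsol 0),
      isThirdOrderSolution_wronskian (hdiff hp₁) (hy 0) (hy 1) (hsol 0) (hsol 1)]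
end

section
/- Let k ≥ 1 and let (C_j)_{j=0}^{k} be real polynomials in a real variable B defined by the backward three-term recursion φ_j C_j = (j+1)B C_{j+1} + (j+1)(j+3/2)(j+2) g₂ C_{j+2} for j = k-1, ..., 0, with C_k = 1, C_{k+1} = C_{k+2} = 0, where g₂ > 0 and φ_j < 0 for 0 ≤ j ≤ k-1. Then for each 0 ≤ j ≤ k-1, C_j is a polynomial of degree k-j in B whose leading coefficient has sign (-1)^{k-j}, C_j has k-j distinct real roots, and the roots of C_j and C_{j+1} strictly interlace: r₁^j < r₁^{j+1} < r₂^j < ⋯ < r_{k-j-1}^{j+1} < r_{k-j}^j. -/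
/-!
Downward induction on `j`. Suppose `C_{j+1}` has simple roots `s_0 < ⋯ < s_{m-1}` and the roots
of `C_{j+2}` interlace them. Then `C_{j+2}(s_i)` has sign `(-1)^i`, and evaluating the recursion
at `s_i`, where the middle term vanishes, shows that `C_j(s_i)` has sign `(-1)^{i+1}` because
`φ_j < 0 < g₂`. The leading coefficient fixes the signs of `C_j` at `±∞`, so the intermediate value
theorem gives a root of `C_j` in each of the `m + 1` gaps `(-∞, s_0), (s_0, s_1), …, (s_{m-1}, ∞)`.
Since `deg C_j = m + 1` these are all its roots; hence `C_j = lc · ∏ (X - t_l)`, whose sign between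
consecutive roots is what the next step needs.
-/

open Polynomial Filter Finset

theorem exists_zeros_of_alternating_sign {f : ℝ → ℝ} (hf : Continuous f) {b : ℕ → ℝ} {n : ℕ}
    (hb : ∀ i < n, b i < b (i + 1)) (hsign : ∀ i ≤ n, 0 < (-1) ^ i * f (b i)) :
    ∃ t : ℕ → ℝ, ∀ i < n, b i < t i ∧ t i < b (i + 1) ∧ f (t i) = 0 := by
  have h : ∀ i < n, ∃ z ∈ Set.Ioo (b i) (b (i + 1)), f z = 0 := by
    intro i hi
    have hright : (-1) ^ i * f (b (i + 1)) < 0 := by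
      have := hsign (i + 1) hi
      rw [pow_succ] at this
      linarith
    obtain ⟨z, hz, hz0⟩ := intermediate_value_Ioo' (hb i hi).le
      (continuous_const.mul hf).continuousOn ⟨hright, hsign i hi.le⟩
    exact ⟨z, hz, by simpa using hz0⟩
  choose! t ht using h
  exact ⟨t, fun i hi => ⟨(ht i hi).1.1, (ht i hi).1.2, (ht i hi).2⟩⟩

namespace Polynomial

theorem eventually_atTop_eval_pos {P : ℝ[X]} (hdeg : 0 < P.degree) (hlc : 0 < P.leadingCoeff) :
    ∀ᶠ x in atTop, 0 < P.eval x :=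
  (P.tendsto_atTop_of_leadingCoeff_nonneg hdeg hlc.le).eventually_gt_atTop 0

theorem eventually_atBot_eval_pos {P : ℝ[X]} (hdeg : 0 < P.degree)
    (hlc : 0 < (-1) ^ P.natDegree * P.leadingCoeff) : ∀ᶠ x in atBot, 0 < P.eval x := by
  have h := eventually_atTop_eval_pos (P := P.comp (-X)) (by simpa [degree_comp] using hdeg)
    (by rwa [comp_neg_X_leadingCoeff_eq])
  simpa using tendsto_neg_atBot_atTop.eventually h

theorem exists_eval_pos_lt_and_gt {P : ℝ[X]} {n : ℕ} (hdeg : P.natDegree = n) (hn : 0 < n)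
    (hlc : 0 < (-1) ^ n * P.leadingCoeff) (x y : ℝ) :
    ∃ u v, u < x ∧ y < v ∧ 0 < P.eval u ∧ 0 < (-1) ^ n * P.eval v := by
  have hpos : 0 < P.degree := natDegree_pos_iff_degree_pos.mp (hdeg ▸ hn)
  obtain ⟨u, hPu, hu⟩ := ((eventually_atBot_eval_pos hpos (hdeg ▸ hlc)).and
    (eventually_lt_atBot x)).exists
  obtain ⟨v, hPv, hv⟩ := ((eventually_atTop_eval_pos (P := C ((-1) ^ n) * P)
    (by rwa [degree_C_mul (by positivity)]) (by rwa [leadingCoeff_mul, leadingCoeff_C])).and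
    (eventually_gt_atTop y)).exists
  rw [eval_mul, eval_C] at hPv
  exact ⟨u, v, hu, hv, hPu, hPv⟩

end Polynomial

/-- The sign condition says that `P` is positive near `-∞`. -/
structure SortedRoots (P : ℝ[X]) (m : ℕ) (t : ℕ → ℝ) : Prop where
  natDegree_eq : P.natDegree = m
  neg_one_pow_mul_leadingCoeff_pos : 0 < (-1 : ℝ) ^ m * P.leadingCoeff
  isRoot : ∀ i < m, P.IsRoot (t i)
  lt : ∀ i₁ i₂, i₁ < i₂ → i₂ < m → t i₁ < t i₂

def Interlaces (m : ℕ) (t s : ℕ → ℝ) : Prop :=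
  ∀ i, i + 1 < m → t i < s i ∧ s i < t (i + 1)

theorem neg_one_pow_mul_prod_sub_pos {t : ℕ → ℝ} {m i : ℕ} (hi : i ≤ m) {x : ℝ}
    (hlow : ∀ l < i, t l < x) (hhigh : ∀ l, i ≤ l → l < m → x < t l) :
    0 < (-1) ^ (m - i) * ∏ l ∈ range m, (x - t l) := by
  obtain ⟨n, rfl⟩ := Nat.exists_eq_add_of_le hi
  have hneg : ∏ l ∈ range n, -(x - t (i + l)) = (-1) ^ n * ∏ l ∈ range n, (x - t (i + l)) := by
    rw [prod_neg, card_range]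
  simp only [neg_sub] at hneg
  rw [prod_range_add, Nat.add_sub_cancel_left, mul_left_comm, ← hneg]
  refine mul_pos (prod_pos fun l hl => ?_) (prod_pos fun l hl => ?_)
  · linarith [hlow l (mem_range.mp hl)]
  · linarith [hhigh (i + l) (by omega) (by simp at hl; omega)]

namespace SortedRoots

variable {P : ℝ[X]} {m : ℕ} {t : ℕ → ℝ}

theorem one (t : ℕ → ℝ) : SortedRoots 1 0 t :=
  ⟨natDegree_one, by simp, fun _ h => absurd h (Nat.not_lt_zero _),
    fun _ _ _ h => absurd h (Nat.not_lt_zero _)⟩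

theorem ne_zero (h : SortedRoots P m t) : P ≠ 0 := by
  rintro rfl
  simpa using h.neg_one_pow_mul_leadingCoeff_pos

theorem eq_C_mul_prod (h : SortedRoots P m t) :
    P = C P.leadingCoeff * ∏ l ∈ range m, (X - C (t l)) := by
  have hinj : Set.InjOn t (range m) := by
    intro a ha b hb hab
    by_contra hne
    rcases Nat.lt_or_gt_of_ne hne with hlt | hlt
    · exact (h.lt a b hlt (mem_range.mp hb)).ne hab
    · exact (h.lt b a hlt (mem_range.mp ha)).ne hab.symm
  have hdvd : ∏ l ∈ range m, (X - C (t l)) ∣ P := by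
    refine prod_dvd_of_coprime (fun a ha b hb hab => ?_) fun l hl => ?_
    · exact isCoprime_X_sub_C_of_isUnit_sub (sub_ne_zero.mpr fun e => hab (hinj ha hb e)).isUnit
    · exact dvd_iff_isRoot.mpr (h.isRoot l (mem_range.mp hl))
  refine eq_leadingCoeff_mul_of_monic_of_dvd_of_natDegree_le
    (monic_prod_of_monic _ _ fun l _ => monic_X_sub_C (t l)) hdvd ?_
  rw [natDegree_finsetProd_X_sub_C_eq_card, card_range, h.natDegree_eq]

theorem neg_one_pow_mul_eval_pos (h : SortedRoots P m t) {i : ℕ} (hi : i ≤ m) {x : ℝ}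
    (hlow : ∀ l < i, t l < x) (hhigh : ∀ l, i ≤ l → l < m → x < t l) :
    0 < (-1) ^ i * P.eval x := by
  have hsign : (-1 : ℝ) ^ i = (-1) ^ m * (-1) ^ (m - i) := by
    rw [← pow_add, ← Nat.add_sub_cancel' hi, Nat.add_sub_cancel_left, add_assoc, ← two_mul,
      pow_add, pow_mul, neg_one_sq, one_pow, mul_one]
  rw [h.eq_C_mul_prod, eval_mul, eval_C, eval_prod, hsign]
  simp only [eval_sub, eval_X, eval_C]
  have := mul_pos h.neg_one_pow_mul_leadingCoeff_pos (neg_one_pow_mul_prod_sub_pos hi hlow hhigh)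
  linarith

theorem neg_one_pow_mul_eval_pos_of_interlaces (h : SortedRoots P m t) {s : ℕ → ℝ}
    (hst : Interlaces (m + 1) s t) {i : ℕ} (hi : i < m + 1) : 0 < (-1) ^ i * P.eval (s i) := by
  refine h.neg_one_pow_mul_eval_pos (by omega) (fun l hl => ?_) fun l hil hl => ?_
  · have hlast := (hst (i - 1) (by omega)).2
    rw [Nat.sub_add_cancel (by omega)] at hlast
    rcases (show l = i - 1 ∨ l < i - 1 by omega) with rfl | hl'
    · exact hlast
    · exact (h.lt l (i - 1) hl' (by omega)).trans hlast
  · rcases hil.eq_or_lt with rfl | hil'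
    · exact (hst i (by omega)).1
    · exact (hst i (by omega)).1.trans (h.lt i l hil' hl)

end SortedRoots

theorem exists_sortedRoots_interlaces_of_alternating {P : ℝ[X]} {m : ℕ} {s : ℕ → ℝ}
    (hdeg : P.natDegree = m + 1) (hlc : 0 < (-1) ^ (m + 1) * P.leadingCoeff)
    (hs : ∀ i₁ i₂, i₁ < i₂ → i₂ < m → s i₁ < s i₂)
    (hsign : ∀ i < m, 0 < (-1) ^ (i + 1) * P.eval (s i)) :
    ∃ t, SortedRoots P (m + 1) t ∧ Interlaces (m + 1) t s := by
  obtain ⟨u, v, hu, hv, hPu, hPv⟩ :=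
    exists_eval_pos_lt_and_gt hdeg (Nat.succ_pos m) hlc (s 0) (max (s 0) (s (m - 1)))
  rw [max_lt_iff] at hv
  -- `u < s 0 < ⋯ < s (m - 1) < v`, at which `P` alternates in sign
  set b : ℕ → ℝ := fun i => if i = 0 then u else if i ≤ m then s (i - 1) else v with hb_def
  have hb : ∀ i < m + 1, b i < b (i + 1) := by
    intro i hi
    rcases Nat.eq_zero_or_pos i with rfl | hi0
    · rcases Nat.eq_zero_or_pos m with rfl | hm
      · simpa [hb_def] using hu.trans hv.1
      · simpa [hb_def, Nat.one_le_iff_ne_zero.mpr hm.ne'] using hu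
    · rcases (show i < m ∨ i = m by omega) with him | rfl
      · simp only [hb_def, if_neg hi0.ne', if_neg (Nat.succ_ne_zero i), if_pos him.le,
          if_pos (Nat.succ_le_of_lt him), Nat.add_sub_cancel]
        exact hs _ _ (by omega) him
      · simpa [hb_def, hi0.ne'] using hv.2
  have hbsign : ∀ i ≤ m + 1, 0 < (-1) ^ i * P.eval (b i) := by
    intro i hi
    simp only [hb_def]
    split_ifs with h0 hm
    · simpa [h0] using hPu
    · simpa [Nat.sub_add_cancel (Nat.one_le_iff_ne_zero.mpr h0)] using hsign (i - 1) (by omega)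
    · rwa [show i = m + 1 by omega]
  obtain ⟨t, ht⟩ := exists_zeros_of_alternating_sign P.continuous hb hbsign
  have hts : ∀ i < m, t i < s i ∧ s i < t (i + 1) := by
    intro i hi
    have h₁ := (ht i (by omega)).2.1
    have h₂ := (ht (i + 1) (by omega)).1
    simp only [hb_def, if_neg (Nat.succ_ne_zero i), if_pos (Nat.succ_le_of_lt hi),
      Nat.add_sub_cancel] at h₁ h₂
    exact ⟨h₁, h₂⟩
  have hmono : StrictMonoOn t (Set.Iic m) :=
    strictMonoOn_Iic_of_lt_succ fun i hi => (hts i hi).1.trans (hts i hi).2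
  exact ⟨t, ⟨hdeg, hlc, fun i hi => (ht i hi).2.2, fun i₁ i₂ h₁₂ h₂ =>
    hmono (by simp; omega) (by simp; omega) h₁₂⟩, fun i hi => hts i (by omega)⟩

theorem natDegree_eq_succ_and_leadingCoeff_of_recurrence {P₀ P₁ P₂ : ℝ[X]} {φ c a : ℝ}
    (hφ : φ ≠ 0) (hc : c ≠ 0) (hP₁ : P₁ ≠ 0) (h₂ : P₂.degree < P₁.natDegree)
    (hrec : C φ * P₀ = C c * X * P₁ + C a * P₂) :
    P₀.natDegree = P₁.natDegree + 1 ∧ φ * P₀.leadingCoeff = c * P₁.leadingCoeff := by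
  have hcX : C c * X ≠ 0 := mul_ne_zero (C_ne_zero.mpr hc) X_ne_zero
  have hdeg : (C c * X * P₁).natDegree = P₁.natDegree + 1 := by
    rw [natDegree_mul hcX hP₁, natDegree_C_mul_X _ hc, add_comm]
  have hlt : (C a * P₂).degree < (C c * X * P₁).degree := by
    rw [degree_eq_natDegree (mul_ne_zero hcX hP₁), hdeg, ← smul_eq_C_mul]
    exact (degree_smul_le a P₂).trans_lt (h₂.trans (by exact_mod_cast Nat.lt_succ_self _))
  constructor
  · simpa [natDegree_C_mul hφ, natDegree_add_eq_left_of_degree_lt hlt, hdeg]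
      using congrArg natDegree hrec
  · simpa [leadingCoeff_add_of_degree_lt' hlt] using congrArg leadingCoeff hrec

theorem SortedRoots.exists_of_recurrence {P₀ P₁ P₂ : ℝ[X]} {φ c a : ℝ} {m : ℕ} {s : ℕ → ℝ}
    (hφ : φ < 0) (hc : 0 < c) (ha : 0 < a) (hrec : C φ * P₀ = C c * X * P₁ + C a * P₂)
    (h₁ : SortedRoots P₁ m s) (h₂ : P₂.degree < m)
    (h₂sign : ∀ i < m, 0 < (-1) ^ i * P₂.eval (s i)) :
    ∃ t, SortedRoots P₀ (m + 1) t ∧ Interlaces (m + 1) t s := by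
  obtain ⟨hdeg, hlc⟩ := natDegree_eq_succ_and_leadingCoeff_of_recurrence hφ.ne hc.ne'
    h₁.ne_zero (by rwa [h₁.natDegree_eq]) hrec
  refine exists_sortedRoots_interlaces_of_alternating (by rw [hdeg, h₁.natDegree_eq]) ?_ h₁.lt
    fun i hi => ?_
  · have key : -φ * ((-1) ^ (m + 1) * P₀.leadingCoeff) = c * ((-1) ^ m * P₁.leadingCoeff) := by
      rw [pow_succ]
      linear_combination (-1) ^ m * hlc
    refine pos_of_mul_pos_right ?_ (neg_nonneg.mpr hφ.le)
    rw [key]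
    exact mul_pos hc h₁.neg_one_pow_mul_leadingCoeff_pos
  · have hroot : P₁.eval (s i) = 0 := h₁.isRoot i hi
    have heval := congrArg (eval (s i)) hrec
    simp only [eval_mul, eval_add, eval_C, eval_X, hroot, mul_zero, zero_add] at heval
    have key : -φ * ((-1) ^ (i + 1) * P₀.eval (s i)) = a * ((-1) ^ i * P₂.eval (s i)) := by
      rw [pow_succ]
      linear_combination (-1) ^ i * heval
    refine pos_of_mul_pos_right ?_ (neg_nonneg.mpr hφ.le)
    rw [key]
    exact mul_pos ha (h₂sign i hi)

theorem exists_interlacing_roots_of_recurrence {k : ℕ} {φ c a : ℕ → ℝ} {p : ℕ → ℝ[X]}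
    (hφ : ∀ j < k, φ j < 0) (hc : ∀ j < k, 0 < c j) (ha : ∀ j < k, 0 < a j)
    (hk : p k = 1) (hk₁ : p (k + 1) = 0)
    (hrec : ∀ j < k, C (φ j) * p j = C (c j) * X * p (j + 1) + C (a j) * p (j + 2)) :
    ∃ r : ℕ → ℕ → ℝ, ∀ j < k,
      SortedRoots (p j) (k - j) (r j) ∧ Interlaces (k - j) (r j) (r (j + 1)) := by
  suffices h : ∀ d ≤ k, ∃ r : ℕ → ℕ → ℝ, ∀ j, k - d ≤ j → j ≤ k →
      SortedRoots (p j) (k - j) (r j) ∧ Interlaces (k - j) (r j) (r (j + 1)) by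
    obtain ⟨r, hr⟩ := h k le_rfl
    exact ⟨r, fun j hj => hr j (by omega) hj.le⟩
  intro d hd
  induction d with
  | zero =>
    refine ⟨0, fun j hj hjk => ?_⟩
    obtain rfl : j = k := by omega
    simpa [hk, Interlaces] using SortedRoots.one 0
  | succ d ih =>
    obtain ⟨r, hr⟩ := ih (by omega)
    set j := k - (d + 1) with hj
    have hjk : j < k := by omega
    obtain ⟨h₁, -⟩ := hr (j + 1) (by omega) (by omega)
    have h₂ : (p (j + 2)).degree < ↑(k - (j + 1)) ∧
        ∀ i < k - (j + 1), 0 < (-1) ^ i * (p (j + 2)).eval (r (j + 1) i) := by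
      rcases (show j + 1 = k ∨ j + 2 ≤ k by omega) with htop | hle
      · simp [show j + 2 = k + 1 by omega, hk₁, htop]
      · obtain ⟨h₂, -⟩ := hr (j + 2) (by omega) hle
        obtain ⟨-, h₁₂⟩ := hr (j + 1) (by omega) (by omega)
        rw [show k - (j + 1) = k - (j + 2) + 1 by omega] at h₁₂ ⊢
        refine ⟨?_, fun i hi => h₂.neg_one_pow_mul_eval_pos_of_interlaces h₁₂ hi⟩
        rw [degree_eq_natDegree h₂.ne_zero, h₂.natDegree_eq]
        exact_mod_cast Nat.lt_succ_self _
    obtain ⟨t, ht, hts⟩ := h₁.exists_of_recurrence (hφ j hjk) (hc j hjk) (ha j hjk)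
      (hrec j hjk) h₂.1 h₂.2
    refine ⟨Function.update r j t, fun j' hj' hj'k => ?_⟩
    rcases (show j' = j ∨ j < j' by omega) with rfl | hlt
    · rw [Function.update_self, Function.update_of_ne (by omega),
        show k - j = k - (j + 1) + 1 by omega]
      exact ⟨ht, hts⟩
    · rw [Function.update_of_ne hlt.ne', Function.update_of_ne (by omega)]
      exact hr j' (by omega) hj'k

theorem stmt6_general (k : ℕ) (g₂ : ℝ) (hg₂ : 0 < g₂)
    (φ : ℕ → ℝ) (hφ : ∀ j, j < k → φ j < 0)
    (C : ℕ → Polynomial ℝ)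
    (hCk : C k = 1) (hCk1 : C (k + 1) = 0)
    (hrec : ∀ j, j < k →
      Polynomial.C (φ j) * C j =
        Polynomial.C ((j : ℝ) + 1) * Polynomial.X * C (j + 1)
          + Polynomial.C (((j : ℝ) + 1) * ((j : ℝ) + 3 / 2) * ((j : ℝ) + 2) * g₂)
              * C (j + 2)) :
    ∃ r : ℕ → ℕ → ℝ,
      ∀ j, j < k →
        (C j).natDegree = k - j ∧
        0 < (-1 : ℝ) ^ (k - j) * (C j).leadingCoeff ∧
        (∀ i, i < k - j → (C j).IsRoot (r j i)) ∧
        (∀ i₁ i₂, i₁ < i₂ → i₂ < k - j → r j i₁ < r j i₂) ∧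
        (∀ i, i + 1 < k - j → r j i < r (j + 1) i ∧ r (j + 1) i < r j (i + 1)) := by
  obtain ⟨r, hr⟩ := exists_interlacing_roots_of_recurrence (c := fun j => (j : ℝ) + 1)
    (a := fun j => ((j : ℝ) + 1) * ((j : ℝ) + 3 / 2) * ((j : ℝ) + 2) * g₂) hφ
    (fun j _ => by positivity) (fun j _ => by positivity) hCk hCk1 hrec
  refine ⟨r, fun j hj => ?_⟩
  obtain ⟨h, hI⟩ := hr j hj
  exact ⟨h.natDegree_eq, h.neg_one_pow_mul_leadingCoeff_pos, h.isRoot, h.lt, hI⟩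

/-- Sturm-sequence interlacing for the backward three-term recursion
`φ_j C_j = (j+1)B C_{j+1} + (j+1)(j+3/2)(j+2) g₂ C_{j+2}` with `C_k = 1`,
`C_{k+1} = C_{k+2} = 0`, `g₂ > 0`, `φ_j < 0` for `0 ≤ j ≤ k-1`: each `C_j`
(`0 ≤ j ≤ k-1`) has degree `k-j`, leading coefficient of sign `(-1)^{k-j}`,
`k-j` distinct real roots, and the roots of `C_j` and `C_{j+1}` strictly interlace. -/
theorem stmt6 (k : ℕ) (hk : 1 ≤ k) (g₂ : ℝ) (hg₂ : 0 < g₂)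
    (φ : ℕ → ℝ) (hφ : ∀ j, j < k → φ j < 0)
    (C : ℕ → Polynomial ℝ)
    (hCk : C k = 1) (hCk1 : C (k + 1) = 0) (hCk2 : C (k + 2) = 0)
    (hrec : ∀ j, j < k →
      Polynomial.C (φ j) * C j =
        Polynomial.C ((j : ℝ) + 1) * Polynomial.X * C (j + 1)
          + Polynomial.C (((j : ℝ) + 1) * ((j : ℝ) + 3 / 2) * ((j : ℝ) + 2) * g₂)
              * C (j + 2)) :
    ∃ r : ℕ → ℕ → ℝ,
      ∀ j, j < k →
        (C j).natDegree = k - j ∧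
        0 < (-1 : ℝ) ^ (k - j) * (C j).leadingCoeff ∧
        (∀ i, i < k - j → (C j).IsRoot (r j i)) ∧
        (∀ i₁ i₂, i₁ < i₂ → i₂ < k - j → r j i₁ < r j i₂) ∧
        (∀ i, i + 1 < k - j → r j i < r (j + 1) i ∧ r (j + 1) i < r j (i + 1)) :=
  stmt6_general k g₂ hg₂ φ hφ C hCk hCk1 hrec
end

section
/- Suppose all solutions of the ODE y''' - (α℘(z)+B)y' + β℘'(z)y = 0 on ℂ are meromorphic and all three local exponents -n-l, 1-l, n+2l+2 at 0 are odd integers (i.e. n is odd and l is even). Then every solution y satisfies y(z) = -y(-z), i.e. all solutions are odd functions. -/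
/-!
If `y ∈ V`, then `g z = y z + y (-z)` lies in `V` and is even. The trailing coefficient `c ≠ 0`
of an even `g` of order `m` at `0` satisfies `c = (-1) ^ m • c`, so `m` is even; as every
nonzero element of `V` has odd order, `g = 0`, i.e. `y` is odd.
-/

open Filter Topology

section

variable {𝕜 : Type*} [NontriviallyNormedField 𝕜] {E : Type*} [NormedAddCommGroup E]
  [NormedSpace 𝕜 E] {f : 𝕜 → E} {x : 𝕜}

theorem not_eventuallyConst_neg_nhds : ¬EventuallyConst (Neg.neg : 𝕜 → 𝕜) (𝓝 x) := by
  have hneg : AnalyticAt 𝕜 (Neg.neg : 𝕜 → 𝕜) x := by fun_prop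
  rw [eventuallyConst_iff_analyticOrderAt_sub_eq_top,
    hneg.analyticOrderAt_sub_eq_one_of_deriv_ne_zero (by simp)]
  simp

theorem MeromorphicAt.meromorphicTrailingCoeffAt_comp_neg (hf : MeromorphicAt f (-x)) :
    meromorphicTrailingCoeffAt (f ∘ Neg.neg) x =
      (-1 : 𝕜) ^ (meromorphicOrderAt f (-x)).untop₀ • meromorphicTrailingCoeffAt f (-x) := by
  classical
  rw [hf.meromorphicTrailingCoeffAt_comp (by fun_prop) not_eventuallyConst_neg_nhds]
  have hlin : (fun z : 𝕜 => -z - -x) = fun z => -(z - x) := by ext; ring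
  rw [hlin, meromorphicTrailingCoeffAt_fun_neg, meromorphicTrailingCoeffAt_id_sub_const,
    if_pos rfl]

theorem Function.Even.even_of_meromorphicOrderAt_eq [CharZero 𝕜] (hf : Function.Even f)
    (hmer : MeromorphicAt f 0) {m : ℤ} (hm : meromorphicOrderAt f 0 = m) : Even m := by
  by_contra hodd
  have := IsAddTorsionFree.of_isTorsionFree 𝕜 E
  have hc := hmer.meromorphicTrailingCoeffAt_ne_zero (hm ▸ WithTop.coe_ne_top)
  have h := (neg_zero (G := 𝕜) ▸ hmer).meromorphicTrailingCoeffAt_comp_neg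
  rw [neg_zero, (funext hf : f ∘ Neg.neg = f), hm, WithTop.untop₀_coe, (Int.not_even_iff_odd.1 hodd).neg_one_zpow,
    neg_one_smul, self_eq_neg] at h
  exact hc h

end

theorem stmt8_general (V : Submodule ℂ (ℂ → ℂ))
    (hrefl : ∀ y ∈ V, (fun z => y (-z)) ∈ V)
    (hodd : ∀ y ∈ V, y ≠ 0 →
      ∃ (h : MeromorphicAt y 0) (m : ℤ), meromorphicOrderAt y 0 = (m : WithTop ℤ) ∧ Odd m) :
    ∀ y ∈ V, ∀ z, y (-z) = -y z := by
  intro y hy z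
  set g : ℂ → ℂ := fun w => y w + y (-w)
  have hg_even : Function.Even g := fun w => by simp [g, add_comm]
  have hg_zero : g = 0 := by
    by_contra hg
    obtain ⟨hmer, m, hm, hm_odd⟩ := hodd g (V.add_mem hy (hrefl y hy)) hg
    exact Int.not_even_iff_odd.2 hm_odd (hg_even.even_of_meromorphicOrderAt_eq hmer hm)
  exact eq_neg_of_add_eq_zero_left (by simpa [g, add_comm] using congrFun hg_zero z)

/-- If a 3-dimensional space `V` of meromorphic functions on `ℂ` is closed under
`y ↦ y(-·)` and every nonzero element of `V` has odd (finite) vanishing/pole order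
at `0`, then every element of `V` is an odd function. -/
theorem stmt8 (V : Submodule ℂ (ℂ → ℂ)) (hdim : Module.finrank ℂ V = 3)
    (hmer : ∀ y ∈ V, ∀ z : ℂ, MeromorphicAt y z)
    (hrefl : ∀ y ∈ V, (fun z => y (-z)) ∈ V)
    (hodd : ∀ y ∈ V, y ≠ 0 →
      ∃ (h : MeromorphicAt y 0) (m : ℤ), meromorphicOrderAt y 0 = (m : WithTop ℤ) ∧ Odd m) :
    ∀ y ∈ V, ∀ z, y (-z) = -y z :=
  stmt8_general V hrefl hodd
end

section
/- Suppose n is odd, l is odd, with α = n²+3nl+3l²+3l+2n, β = (l-1)(n+l)(n+2l+2)/2. If the ODE y''' - (α℘+B)y' + β℘'y = 0 has two linearly independent even elliptic solutions y₀ (with pole order l-1 at 0) and y₁ (with pole order n+l at 0), and its monodromy group (generated by commuting N₁, N₂ ∈ SL(3,ℂ)) is conjugate into SU(3), then N₁ = N₂ = I₃ and every solution is elliptic; in particular the local solution y₂ with positive exponent n+2l+2 at 0 is an entire elliptic function vanishing at 0, hence y₂ ≡ 0, a contradiction. Therefore the monodromy cannot be unitary. -/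
/-!
Write the solution space in a basis `b` and let `U₁`, `U₂` be the monodromy matrices of the
translations by `1` and `τ`. The coordinate vectors of the two elliptic solutions are fixed by
both, so each `Uₖ` fixes a plane pointwise. Having determinant one, it then acts trivially on the
quotient line, i.e. `Uₖ - 1` maps everything into that plane, and for a unitary matrix this
forces `Uₖ = 1`. Hence every solution is elliptic, and by Liouville the entire solution vanishing
at `0` is zero.
-/

open Function Matrix Module
open scoped ComplexOrder

theorem Submodule.exists_sum_smul_eq_of_linearIndependent {K V ι : Type*} [Field K]
    [AddCommGroup V] [Module K V] [Fintype ι] {W : Submodule K V} [FiniteDimensional K W]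
    {b : ι → V} (hbW : ∀ i, b i ∈ W) (hb : LinearIndependent K b)
    (hcard : finrank K W = Fintype.card ι) {y : V} (hy : y ∈ W) :
    ∃ e : ι → K, ∑ i, e i • b i = y := by
  have hspan : Submodule.span K (Set.range b) = W :=
    Submodule.eq_of_le_of_finrank_eq (Submodule.span_le.2 (Set.range_subset_iff.2 hbW))
      (by rw [finrank_span_eq_card hb, hcard])
  exact (Submodule.mem_span_range_iff_exists_fun K).1 (hspan ▸ hy)

theorem LinearMap.apply_sub_mem_of_det_eq_one {K V : Type*} [Field K] [AddCommGroup V]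
    [Module K V] [FiniteDimensional K V] (f : V →ₗ[K] V) {W : Submodule K V}
    (hW : finrank K (V ⧸ W) = 1) (hfix : ∀ x ∈ W, f x = x) (hdet : f.det = 1) (y : V) :
    f y - y ∈ W := by
  have hinv : W ≤ W.comap f := fun x hx => by simpa [hfix x hx] using hx
  have hres : f.restrict hinv = LinearMap.id := by ext x; simp [hfix x x.2]
  obtain ⟨μ, hμ, -⟩ := (W.mapQ W f hinv).existsUnique_eq_smul_id_of_finrank_eq_one hW
  have hμ1 : μ = 1 := by
    simpa [hres, hμ, LinearMap.det_smul, hW, hdet] using (f.det_eq_det_mul_det W hinv).symm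
  rw [← Submodule.Quotient.eq, ← Submodule.mapQ_apply W W f (h := hinv), hμ, hμ1]
  simp

theorem Matrix.mulVec_eq_self_of_mem_unitaryGroup {R n : Type*} [Fintype n] [DecidableEq n]
    [CommRing R] [StarRing R] [PartialOrder R] [StarOrderedRing R] [NoZeroDivisors R]
    {U : Matrix n n R} (hU : U ∈ unitaryGroup n R) {y : n → R}
    (h : U *ᵥ (U *ᵥ y - y) = U *ᵥ y - y) : U *ᵥ y = y := by
  set w := U *ᵥ y - y
  have hw : star w ⬝ᵥ w = 0 := calc
    star w ⬝ᵥ w = star (U *ᵥ w) ⬝ᵥ U *ᵥ y - star w ⬝ᵥ y := by rw [h, dotProduct_sub]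
    _ = 0 := by
      rw [star_mulVec, dotProduct_mulVec, vecMul_vecMul, ← star_eq_conjTranspose,
        (mem_unitaryGroup_iff').1 hU, vecMul_one, sub_self]
  exact sub_eq_zero.1 (dotProduct_star_self_eq_zero.1 hw)

theorem Matrix.eq_one_of_mem_unitaryGroup_of_forall_mulVec_eq_self {K n ι : Type*} [Fintype n]
    [DecidableEq n] [Fintype ι] [Field K] [StarRing K] [PartialOrder K] [StarOrderedRing K]
    {U : Matrix n n K} (hU : U ∈ unitaryGroup n K) (hdet : U.det = 1) {v : ι → n → K}
    (hv : LinearIndependent K v) (hcard : Fintype.card ι + 1 = Fintype.card n)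
    (hfix : ∀ i, U *ᵥ v i = v i) : U = 1 := by
  set W := Submodule.span K (Set.range v)
  have hW : finrank K ((n → K) ⧸ W) = 1 := by
    have := W.finrank_quotient_add_finrank
    rw [finrank_span_eq_card hv, finrank_fintype_fun_eq_card] at this
    omega
  have hfixW : ∀ x ∈ W, toLin' U x = x := fun x hx =>
    (Submodule.span_le (p := LinearMap.eqLocus (toLin' U) LinearMap.id)).2
      (Set.range_subset_iff.2 hfix) hx
  have hunip := (toLin' U).apply_sub_mem_of_det_eq_one hW hfixW
    (by rw [LinearMap.det_toLin', hdet])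
  refine toLin'.injective (LinearMap.ext fun y => ?_)
  simpa using mulVec_eq_self_of_mem_unitaryGroup hU (hfixW _ (hunip y))

def HasMonodromy {α K ι : Type*} [Add α] [CommSemiring K] [Fintype ι] (b : ι → α → K) (t : α)
    (U : Matrix ι ι K) : Prop :=
  ∀ i z, b i (z + t) = ∑ j, U j i * b j z

namespace HasMonodromy

variable {α K ι : Type*} [Add α] [Fintype ι] {b : ι → α → K} {t : α}

theorem sum_smul_apply_add [CommSemiring K] {U : Matrix ι ι K} (h : HasMonodromy b t U)
    (e : ι → K) (z : α) : (∑ i, e i • b i) (z + t) = (∑ j, (U *ᵥ e) j • b j) z := by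
  simp only [Finset.sum_apply, Pi.smul_apply, smul_eq_mul, h _ _, Finset.mul_sum, mulVec,
    dotProduct, Finset.sum_mul]
  rw [Finset.sum_comm]
  exact Finset.sum_congr rfl fun j _ => Finset.sum_congr rfl fun i _ => by ring

theorem periodic_sum_smul [CommSemiring K] [DecidableEq ι] (h : HasMonodromy b t 1) (e : ι → K) :
    Periodic (∑ i, e i • b i) t := fun z => by
  rw [h.sum_smul_apply_add, one_mulVec]

theorem mulVec_eq_self_of_periodic [CommRing K] {U : Matrix ι ι K} (h : HasMonodromy b t U)
    (hb : LinearIndependent K b) {e : ι → K} (hper : Periodic (∑ i, e i • b i) t) :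
    U *ᵥ e = e := by
  refine funext fun i => sub_eq_zero.1 (Fintype.linearIndependent_iff.1 hb (U *ᵥ e - e) ?_ i)
  funext z
  have := (h.sum_smul_apply_add e z).symm.trans (hper z)
  simpa [sub_smul, Finset.sum_sub_distrib, sub_eq_zero] using this

end HasMonodromy

theorem Differentiable.apply_eq_apply_of_periodic (L : PeriodPair) {f : ℂ → ℂ}
    (hf : Differentiable ℂ f) (h₁ : Periodic f L.ω₁) (h₂ : Periodic f L.ω₂) (z w : ℂ) :
    f z = f w := by
  have hL : ∀ z l, l ∈ L.lattice → f (z + l) = f z := by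
    intro z l hl
    obtain ⟨m, n, rfl⟩ := PeriodPair.mem_lattice.1 hl
    exact ((h₁.int_mul m).add_period (h₂.int_mul n)) z
  exact hf.apply_eq_apply_of_bounded
    (IsZLattice.isCompact_range_of_periodic L.lattice f hf.continuous hL).isBounded z w

theorem Complex.linearIndependent_one_of_im_ne_zero {τ : ℂ} (hτ : τ.im ≠ 0) :
    LinearIndependent ℝ ![1, τ] := by
  refine LinearIndependent.pair_iff.2 fun s t hst => ?_
  have ht : t = 0 := by simpa [hτ] using congrArg Complex.im hst
  exact ⟨by simpa [ht] using congrArg Complex.re hst, ht⟩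

theorem stmt17_general (τ : ℂ) (hτ : 0 < τ.im)
    (V : Submodule ℂ (ℂ → ℂ)) (hdim : Module.finrank ℂ V = 3)
    (y₀ y₁ y₂ : ℂ → ℂ) (hy₀V : y₀ ∈ V) (hy₁V : y₁ ∈ V) (hy₂V : y₂ ∈ V)
    (hy₀ell : ∀ z, y₀ (z + 1) = y₀ z ∧ y₀ (z + τ) = y₀ z)
    (hy₁ell : ∀ z, y₁ (z + 1) = y₁ z ∧ y₁ (z + τ) = y₁ z)
    (hind : LinearIndependent ℂ ![y₀, y₁])
    (hy₂hol : Differentiable ℂ y₂) (hy₂0 : y₂ 0 = 0) (hy₂ne : y₂ ≠ 0) :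
    ¬ ∃ (b : Fin 3 → (ℂ → ℂ)) (U₁ U₂ : Matrix (Fin 3) (Fin 3) ℂ),
        (∀ i, b i ∈ V) ∧ LinearIndependent ℂ b ∧
        U₁ ∈ Matrix.unitaryGroup (Fin 3) ℂ ∧ U₂ ∈ Matrix.unitaryGroup (Fin 3) ℂ ∧
        U₁.det = 1 ∧ U₂.det = 1 ∧
        (∀ i z, b i (z + 1) = ∑ j, U₁ j i * b j z) ∧
        (∀ i z, b i (z + τ) = ∑ j, U₂ j i * b j z) := by
  rintro ⟨b, U₁, U₂, hbV, hb, hU₁, hU₂, hdet₁, hdet₂, hmon₁, hmon₂⟩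
  have : FiniteDimensional ℂ V := .of_finrank_pos (by omega)
  have hcoord {y} (hy : y ∈ V) : ∃ e : Fin 3 → ℂ, ∑ i, e i • b i = y :=
    Submodule.exists_sum_smul_eq_of_linearIndependent hbV hb (by simp [hdim]) hy
  obtain ⟨c, rfl⟩ := hcoord hy₀V
  obtain ⟨d, rfl⟩ := hcoord hy₁V
  obtain ⟨e, rfl⟩ := hcoord hy₂V
  have hcd : LinearIndependent ℂ ![c, d] := by
    refine LinearIndependent.of_comp (Fintype.linearCombination ℂ b) ?_
    convert hind using 1
    ext i : 1
    fin_cases i <;> simp [Fintype.linearCombination_apply]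
  have hfix {t U} (hmon : HasMonodromy b t U) (hc : Periodic (∑ i, c i • b i) t)
      (hd : Periodic (∑ i, d i • b i) t) : ∀ i, U *ᵥ ![c, d] i = ![c, d] i :=
    Fin.forall_fin_two.2 ⟨hmon.mulVec_eq_self_of_periodic hb hc,
      hmon.mulVec_eq_self_of_periodic hb hd⟩
  obtain rfl : U₁ = 1 := eq_one_of_mem_unitaryGroup_of_forall_mulVec_eq_self hU₁ hdet₁ hcd
    (by simp) (hfix hmon₁ (fun z => (hy₀ell z).1) (fun z => (hy₁ell z).1))
  obtain rfl : U₂ = 1 := eq_one_of_mem_unitaryGroup_of_forall_mulVec_eq_self hU₂ hdet₂ hcd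
    (by simp) (hfix hmon₂ (fun z => (hy₀ell z).2) (fun z => (hy₁ell z).2))
  let L : PeriodPair := ⟨1, τ, Complex.linearIndependent_one_of_im_ne_zero hτ.ne'⟩
  exact hy₂ne <| funext fun z => (hy₂hol.apply_eq_apply_of_periodic L
    (HasMonodromy.periodic_sum_smul hmon₁ e) (HasMonodromy.periodic_sum_smul hmon₂ e) z 0).trans
    hy₂0

/-- Abstracted Theorem 3.5 (= Theorem 1.4(1)): if the 3-dimensional solution space `V`
(closed under the translations `z ↦ z+1`, `z ↦ z+τ`) contains two linearly independent
elliptic solutions `y₀, y₁` and a nonzero entire solution `y₂` vanishing at `0`, then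
the monodromy cannot be unitary: there is no basis of `V` with respect to which both
translation monodromy matrices lie in `SU(3)`. -/
theorem stmt17 (τ : ℂ) (hτ : 0 < τ.im)
    (V : Submodule ℂ (ℂ → ℂ)) (hdim : Module.finrank ℂ V = 3)
    (hclosed₁ : ∀ y ∈ V, (fun z => y (z + 1)) ∈ V)
    (hclosedτ : ∀ y ∈ V, (fun z => y (z + τ)) ∈ V)
    (y₀ y₁ y₂ : ℂ → ℂ) (hy₀V : y₀ ∈ V) (hy₁V : y₁ ∈ V) (hy₂V : y₂ ∈ V)
    (hy₀ell : ∀ z, y₀ (z + 1) = y₀ z ∧ y₀ (z + τ) = y₀ z)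
    (hy₁ell : ∀ z, y₁ (z + 1) = y₁ z ∧ y₁ (z + τ) = y₁ z)
    (hind : LinearIndependent ℂ ![y₀, y₁])
    (hy₂hol : Differentiable ℂ y₂) (hy₂0 : y₂ 0 = 0) (hy₂ne : y₂ ≠ 0) :
    ¬ ∃ (b : Fin 3 → (ℂ → ℂ)) (U₁ U₂ : Matrix (Fin 3) (Fin 3) ℂ),
        (∀ i, b i ∈ V) ∧ LinearIndependent ℂ b ∧
        U₁ ∈ Matrix.unitaryGroup (Fin 3) ℂ ∧ U₂ ∈ Matrix.unitaryGroup (Fin 3) ℂ ∧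
        U₁.det = 1 ∧ U₂.det = 1 ∧
        (∀ i z, b i (z + 1) = ∑ j, U₁ j i * b j z) ∧
        (∀ i z, b i (z + τ) = ∑ j, U₂ j i * b j z) :=
  stmt17_general τ hτ V hdim y₀ y₁ y₂ hy₀V hy₁V hy₂V hy₀ell hy₁ell hind hy₂hol hy₂0 hy₂ne
end
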